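/- Let G be a finite group, u ∈ Aut(G), and x ∈ G with ord(x) = 2m > 4 and u(x) = x^{-1}. If the cyclic subgroup ⟨x⟩ is contained in the twisted conjugacy class O^{G,u}_x, then ⟨x⟩ is a subrack of O^{G,u}_x isomorphic to the dihedral rack D_{2m}, and O^{G,u}_x is of type D. -/

import Mathlib

/-- A nonempty subset of `X` closed under the operation `op` (a subrack). -/
def IsSubrackOf {X : Type*} (op : X → X → X) (Y : Set X) : Prop :=
  Y.Nonempty ∧ ∀ a ∈ Y, ∀ b ∈ Y, op a b ∈ Y

/-- The rack with underlying set `C ⊆ X` and operation `op` is of type D: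
there is a decomposable subrack `R ⊔ S` of `C` and `r ∈ R`, `s ∈ S` with
`r ▹ (s ▹ (r ▹ s)) ≠ s`. -/
def IsTypeDOn {X : Type*} (op : X → X → X) (C : Set X) : Prop :=
  ∃ R S : Set X, R ⊆ C ∧ S ⊆ C ∧ IsSubrackOf op R ∧ IsSubrackOf op S ∧
    Disjoint R S ∧
    (∀ r ∈ R, ∀ s ∈ S, op r s ∈ S) ∧ (∀ s ∈ S, ∀ r ∈ R, op s r ∈ R) ∧
    ∃ r ∈ R, ∃ s ∈ S, op r (op s (op r s)) ≠ s

/-- The rack operation `y ▹ z = y · u(z · y⁻¹)` on a group `G` with `u ∈ Aut(G)`. -/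
def twOp {G : Type*} [Group G] (u : G ≃* G) (y z : G) : G :=
  y * u (z * y⁻¹)

/-- The twisted conjugacy class `O^{G,u}_x`, the orbit of `x` under the action
`y ⇀_u x = y · x · u(y)⁻¹`. -/
def twClass {G : Type*} [Group G] (u : G ≃* G) (x : G) : Set G :=
  {y | ∃ g : G, g * x * (u g)⁻¹ = y}

/-! When `u x = x⁻¹`, the twisted operation on powers of `x` is `xᵃ ▹ xᵇ = x^(2a - b)`, so
`i ↦ xⁱ` identifies `⟨x⟩` with the dihedral rack `D_{ord x}`. For even `ord x` the even and odd
powers form a decomposition of this subrack, and for `r = 1`, `s = x` one finds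
`r ▹ (s ▹ (r ▹ s)) = x⁻³`, which differs from `x` as soon as `ord x ∤ 4`. -/

section TwistedPowers

variable {G : Type*} [Group G] {u : G ≃* G} {x : G}

lemma twOp_zpow_zpow (hux : u x = x⁻¹) (a b : ℤ) :
    twOp u (x ^ a) (x ^ b) = x ^ (2 * a - b) := by
  rw [twOp, ← zpow_neg, ← zpow_add, map_zpow, hux, inv_zpow, ← zpow_neg, ← zpow_add]
  congr 1
  ring

lemma twOp_mem_zpowers (hux : u x = x⁻¹) {a b : G} (ha : a ∈ Subgroup.zpowers x)
    (hb : b ∈ Subgroup.zpowers x) : twOp u a b ∈ Subgroup.zpowers x := by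
  obtain ⟨k, rfl⟩ := ha
  obtain ⟨l, rfl⟩ := hb
  exact ⟨2 * k - l, (twOp_zpow_zpow hux k l).symm⟩

lemma pow_zmod_val_intCast {n : ℕ} [NeZero n] (hx : orderOf x = n) (k : ℤ) :
    x ^ (k : ZMod n).val = x ^ k := by
  subst hx
  rw [← zpow_natCast, ZMod.val_intCast, zpow_mod_orderOf]

lemma bijOn_pow_val_zpowers {n : ℕ} [NeZero n] (hx : orderOf x = n) :
    Set.BijOn (fun i : ZMod n => x ^ i.val) Set.univ (Subgroup.zpowers x : Set G) := by
  refine ⟨fun i _ => pow_mem (Subgroup.mem_zpowers x) i.val, fun i _ j _ hij => ?_, ?_⟩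
  · have hlt : ∀ k : ZMod n, k.val ∈ Set.Iio (orderOf x) := fun k => hx ▸ k.val_lt
    exact ZMod.val_injective n (pow_injOn_Iio_orderOf (hlt i) (hlt j) hij)
  · rintro _ ⟨k, rfl⟩
    exact ⟨k, trivial, pow_zmod_val_intCast hx k⟩

lemma pow_val_two_mul_sub_eq_twOp {n : ℕ} [NeZero n] (hux : u x = x⁻¹) (hx : orderOf x = n)
    (i j : ZMod n) : x ^ (2 * i - j).val = twOp u (x ^ i.val) (x ^ j.val) := by
  have hcast : 2 * i - j = ((2 * i.val - j.val : ℤ) : ZMod n) := by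
    push_cast [ZMod.natCast_val, ZMod.cast_id]
    rfl
  rw [hcast, pow_zmod_val_intCast hx, ← zpow_natCast, ← zpow_natCast, twOp_zpow_zpow hux]

def evenZPowers (x : G) : Set G := {g | ∃ k : ℤ, x ^ (2 * k) = g}

def oddZPowers (x : G) : Set G := {g | ∃ k : ℤ, x ^ (2 * k + 1) = g}

lemma evenZPowers_subset_zpowers : evenZPowers x ⊆ Subgroup.zpowers x := by
  rintro _ ⟨k, rfl⟩
  exact ⟨2 * k, rfl⟩

lemma oddZPowers_subset_zpowers : oddZPowers x ⊆ Subgroup.zpowers x := by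
  rintro _ ⟨k, rfl⟩
  exact ⟨2 * k + 1, rfl⟩

lemma disjoint_evenZPowers_oddZPowers (heven : Even (orderOf x)) :
    Disjoint (evenZPowers x) (oddZPowers x) := by
  rw [Set.disjoint_left]
  rintro _ ⟨k, rfl⟩ ⟨l, hl⟩
  have hdvd : (orderOf x : ℤ) ∣ 2 * l + 1 - 2 * k := by
    rw [orderOf_dvd_iff_zpow_eq_one, zpow_sub, hl, mul_inv_cancel]
  have htwo : (2 : ℤ) ∣ 2 * l + 1 - 2 * k :=
    dvd_trans (by exact_mod_cast even_iff_two_dvd.mp heven) hdvd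
  omega

lemma twOp_zpow_mem_evenZPowers (hux : u x = x⁻¹) (a : ℤ) {b : G} (hb : b ∈ evenZPowers x) :
    twOp u (x ^ a) b ∈ evenZPowers x := by
  obtain ⟨l, rfl⟩ := hb
  exact ⟨a - l, by rw [twOp_zpow_zpow hux]; ring_nf⟩

lemma twOp_zpow_mem_oddZPowers (hux : u x = x⁻¹) (a : ℤ) {b : G} (hb : b ∈ oddZPowers x) :
    twOp u (x ^ a) b ∈ oddZPowers x := by
  obtain ⟨l, rfl⟩ := hb
  exact ⟨a - l - 1, by rw [twOp_zpow_zpow hux]; ring_nf⟩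

lemma isTypeDOn_twOp_of_zpowers_subset {C : Set G} (hux : u x = x⁻¹)
    (heven : Even (orderOf x)) (hfour : ¬ orderOf x ∣ 4)
    (hC : (Subgroup.zpowers x : Set G) ⊆ C) : IsTypeDOn (twOp u) C := by
  refine ⟨evenZPowers x, oddZPowers x, evenZPowers_subset_zpowers.trans hC,
    oddZPowers_subset_zpowers.trans hC, ⟨⟨1, 0, by simp⟩, ?_⟩, ⟨⟨x, 0, by simp⟩, ?_⟩,
    disjoint_evenZPowers_oddZPowers heven, ?_, ?_, ?_⟩
  · rintro _ ⟨k, rfl⟩ _ hb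
    exact twOp_zpow_mem_evenZPowers hux _ hb
  · rintro _ ⟨k, rfl⟩ _ hb
    exact twOp_zpow_mem_oddZPowers hux _ hb
  · rintro _ ⟨k, rfl⟩ _ hb
    exact twOp_zpow_mem_oddZPowers hux _ hb
  · rintro _ ⟨k, rfl⟩ _ hb
    exact twOp_zpow_mem_evenZPowers hux _ hb
  · refine ⟨x ^ (2 * 0 : ℤ), ⟨0, rfl⟩, x ^ (2 * 0 + 1 : ℤ), ⟨0, rfl⟩, ?_⟩
    simp only [twOp_zpow_zpow hux]
    rw [Ne, zpow_eq_zpow_iff_modEq, Int.modEq_iff_dvd]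
    norm_num [Int.natCast_dvd_ofNat, hfour]

end TwistedPowers

theorem twClass_isTypeD_of_zpowers_subset {G : Type*} [Group G]
    (u : G ≃* G) (x : G) (m : ℕ) (hord : orderOf x = 2 * m) (hm : 4 < 2 * m)
    (hux : u x = x⁻¹) (hsub : (Subgroup.zpowers x : Set G) ⊆ twClass u x) :
    (∀ a ∈ (Subgroup.zpowers x : Set G), ∀ b ∈ (Subgroup.zpowers x : Set G),
      twOp u a b ∈ (Subgroup.zpowers x : Set G)) ∧
    Set.BijOn (fun i : ZMod (2 * m) => x ^ i.val) Set.univ (Subgroup.zpowers x : Set G) ∧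
    (∀ i j : ZMod (2 * m), x ^ (2 * i - j).val = twOp u (x ^ i.val) (x ^ j.val)) ∧
    IsTypeDOn (twOp u) (twClass u x) := by
  have : NeZero (2 * m) := ⟨by omega⟩
  have hfour : ¬ orderOf x ∣ 4 := fun h => by
    have := Nat.le_of_dvd four_pos h
    omega
  exact ⟨fun _ ha _ hb => twOp_mem_zpowers hux ha hb, bijOn_pow_val_zpowers hord,
    pow_val_two_mul_sub_eq_twOp hux hord,
    isTypeDOn_twOp_of_zpowers_subset hux (hord ▸ even_two_mul m) hfour hsub⟩
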